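/- arXiv:2012.00327 — 4 statements merged into one kernel-verified Lean document; each statement's English description precedes it below -/
import Mathlib

section
/- Let M_R and M_I be 2×2 complex unitary matrices such that M_R*M_I = [[e, f],[f, −e]] for some real numbers e, f with e² + f² = 1. Then there exist Δ ∈ [−π, π) and complex numbers α, β with |α|² + |β|² = 1 such that M_R = e^{iΔ}·[[α, β],[−β̄, ᾱ]] and M_I = e^{iΔ}·[[eα + fβ, fα − eβ],[−eβ̄ + fᾱ, −fβ̄ − eᾱ]]. -/
/-!
For `U ∈ U(2)` the adjugate is `det U • Uᴴ`, so the second row of `U = [[a, b], [c, d]]` is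
`det U • (-b̄, ā)`. Writing `det U = E²` with `E = e^{iΔ}` and dividing `U` by `E` gives the form
`[[α, β], [-β̄, ᾱ]]`. Unitarity of `M_R` turns the hypothesis into `M_I = M_R * [[e, f], [f, -e]]`,
from which the formula for `M_I` is a matrix product.
-/

open Matrix Real ComplexConjugate

namespace Matrix

variable {n R : Type*} [Fintype n] [DecidableEq n] [CommRing R] [StarRing R]

theorem adjugate_eq_det_smul_star_of_mem_unitaryGroup {U : Matrix n n R}
    (hU : U ∈ unitaryGroup n R) : adjugate U = U.det • star U :=
  calc adjugate U = adjugate U * (U * star U) := by rw [mem_unitaryGroup_iff.mp hU, mul_one]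
    _ = U.det • star U := by rw [← mul_assoc, adjugate_mul, smul_one_mul]

theorem eq_of_mem_unitaryGroup_fin_two {U : Matrix (Fin 2) (Fin 2) R}
    (hU : U ∈ unitaryGroup (Fin 2) R) :
    U = !![U 0 0, U 0 1; -(U.det * star (U 0 1)), U.det * star (U 0 0)] := by
  have h := adjugate_eq_det_smul_star_of_mem_unitaryGroup hU
  rw [adjugate_fin_two] at h
  have h10 := congrFun₂ h 1 0
  have h00 := congrFun₂ h 0 0
  simp only [Fin.isValue, of_apply, cons_val', cons_val_zero, cons_val_fin_one, cons_val_one,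
    smul_apply, star_apply, smul_eq_mul] at h10 h00
  ext i j
  fin_cases i <;> fin_cases j <;> simp [← h10, ← h00]

theorem mul_star_add_mul_star_eq_one_of_mem_unitaryGroup_fin_two {U : Matrix (Fin 2) (Fin 2) R}
    (hU : U ∈ unitaryGroup (Fin 2) R) : U 0 0 * star (U 0 0) + U 0 1 * star (U 0 1) = 1 := by
  simpa [mul_apply, Fin.sum_univ_two] using congrFun₂ (mem_unitaryGroup_iff.mp hU) 0 0

end Matrix

theorem Complex.exists_exp_mul_I_sq_eq {z : ℂ} (hz : ‖z‖ = 1) :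
    ∃ Δ ∈ Set.Ico (-π) π, exp (Δ * I) ^ 2 = z := by
  refine ⟨z.arg / 2, ⟨?_, ?_⟩, ?_⟩
  · linarith [neg_pi_lt_arg z, pi_pos]
  · linarith [arg_le_pi z, pi_pos]
  · rw [← exp_nat_mul]
    push_cast
    rw [show (2 : ℂ) * (z.arg / 2 * I) = z.arg * I by ring]
    simpa [hz] using norm_mul_exp_arg_mul_I z

theorem Matrix.exists_eq_exp_smul_of_mem_unitaryGroup_fin_two {U : Matrix (Fin 2) (Fin 2) ℂ}
    (hU : U ∈ unitaryGroup (Fin 2) ℂ) :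
    ∃ Δ ∈ Set.Ico (-π) π, ∃ α β : ℂ, ‖α‖ ^ 2 + ‖β‖ ^ 2 = 1 ∧
      U = Complex.exp (Δ * Complex.I) • !![α, β; -conj β, conj α] := by
  obtain ⟨Δ, hΔ, hsq⟩ :=
    Complex.exists_exp_mul_I_sq_eq (CStarRing.norm_of_mem_unitary (det_of_mem_unitary hU))
  refine ⟨Δ, hΔ, ?_⟩
  have hnorm := Complex.norm_exp_ofReal_mul_I Δ
  generalize Complex.exp (Δ * Complex.I) = E at hsq hnorm ⊢
  have hE : E * conj E = 1 := by simp [Complex.mul_conj', hnorm]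
  refine ⟨conj E * U 0 0, conj E * U 0 1, ?_, ?_⟩
  · have hrow := mul_star_add_mul_star_eq_one_of_mem_unitaryGroup_fin_two hU
    simp only [Complex.mul_conj', RCLike.star_def] at hrow
    simp only [norm_mul, Complex.norm_conj, hnorm, one_mul]
    exact_mod_cast hrow
  · refine (eq_of_mem_unitaryGroup_fin_two hU).trans ?_
    ext i j
    fin_cases i <;> fin_cases j <;> simp [← hsq, ← mul_assoc, hE, sq]

theorem dqw_coin_parametrization_general (MR MI : Matrix (Fin 2) (Fin 2) ℂ) (e f : ℝ)
    (hMR : MR ∈ Matrix.unitaryGroup (Fin 2) ℂ)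
    (h : MRᴴ * MI = !![(e : ℂ), (f : ℂ); (f : ℂ), (-e : ℂ)]) :
    ∃ Δ ∈ Set.Ico (-π) π, ∃ α β : ℂ,
      ‖α‖ ^ 2 + ‖β‖ ^ 2 = 1 ∧
      MR = Complex.exp (Δ * Complex.I) •
        !![α, β; -(starRingEnd ℂ) β, (starRingEnd ℂ) α] ∧
      MI = Complex.exp (Δ * Complex.I) •
        !![(e : ℂ) * α + (f : ℂ) * β, (f : ℂ) * α - (e : ℂ) * β;
           -(e : ℂ) * (starRingEnd ℂ) β + (f : ℂ) * (starRingEnd ℂ) α,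
           -(f : ℂ) * (starRingEnd ℂ) β - (e : ℂ) * (starRingEnd ℂ) α] := by
  obtain ⟨Δ, hΔ, α, β, hαβ, hMR'⟩ := exists_eq_exp_smul_of_mem_unitaryGroup_fin_two hMR
  have hMI : MI = MR * !![(e : ℂ), (f : ℂ); (f : ℂ), (-e : ℂ)] := by
    rw [← h, ← mul_assoc, ← star_eq_conjTranspose, mem_unitaryGroup_iff.mp hMR, one_mul]
  refine ⟨Δ, hΔ, α, β, hαβ, hMR', ?_⟩
  rw [hMI, hMR', smul_mul, mul_fin_two]
  congr 1
  ext i j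
  fin_cases i <;> fin_cases j <;> simp <;> ring

/-- If `M_R`, `M_I` are 2×2 unitary matrices with `M_R*M_I = [[e,f],[f,−e]]` for real `e`, `f`
with `e² + f² = 1`, then they admit the parametrization of equation (5) of the paper, for some
`Δ ∈ [−π, π)` and complex `α`, `β` with `|α|² + |β|² = 1`. -/
theorem dqw_coin_parametrization (MR MI : Matrix (Fin 2) (Fin 2) ℂ) (e f : ℝ)
    (hMR : MR ∈ Matrix.unitaryGroup (Fin 2) ℂ) (hMI : MI ∈ Matrix.unitaryGroup (Fin 2) ℂ)
    (hef : e ^ 2 + f ^ 2 = 1)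
    (h : MRᴴ * MI = !![(e : ℂ), (f : ℂ); (f : ℂ), (-e : ℂ)]) :
    ∃ Δ ∈ Set.Ico (-π) π, ∃ α β : ℂ,
      ‖α‖ ^ 2 + ‖β‖ ^ 2 = 1 ∧
      MR = Complex.exp (Δ * Complex.I) •
        !![α, β; -(starRingEnd ℂ) β, (starRingEnd ℂ) α] ∧
      MI = Complex.exp (Δ * Complex.I) •
        !![(e : ℂ) * α + (f : ℂ) * β, (f : ℂ) * α - (e : ℂ) * β;
           -(e : ℂ) * (starRingEnd ℂ) β + (f : ℂ) * (starRingEnd ℂ) α,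
           -(f : ℂ) * (starRingEnd ℂ) β - (e : ℂ) * (starRingEnd ℂ) α] :=
  dqw_coin_parametrization_general MR MI e f hMR h
end

section
/- Let M_R and M_I be 2×2 real orthogonal matrices and let Ψ₀ ∈ ℓ²(ℤ;ℂ²). Then for every n ≥ 0 and x ∈ ℤ: ℜ(U_Dⁿ Ψ₀) = U_Rⁿ(ℜΨ₀) and ℑ(U_Dⁿ Ψ₀) = U_Iⁿ(ℑΨ₀), and hence the DQW probability measure satisfies μ_n(x) = ‖(U_Rⁿ(ℜΨ₀))(x)‖² + ‖(U_Iⁿ(ℑΨ₀))(x)‖², i.e., it is the sum of the probability measures of the two LQWs with coin matrices M_R and M_I and initial states ℜΨ₀ and ℑΨ₀ respectively. -/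
/-! Since both coins are real, `U_D` maps the real part of a state through `M_R` and the imaginary
part through `M_I` without mixing them: taking real (imaginary) parts semiconjugates `U_D` to
`U_R` (`U_I`), hence also `U_Dⁿ` to `U_Rⁿ` (`U_Iⁿ`), and `|z|² = (ℜz)² + (ℑz)²` splits the
measure. -/

open Matrix

noncomputable section

/-- The time evolution of the 2-state LQW on `ℤ` over `ℝ` with coin matrix `M`. -/
def lqwUR (M : Matrix (Fin 2) (Fin 2) ℝ) (Φ : ℤ → Fin 2 → ℝ) : ℤ → Fin 2 → ℝ := fun x =>
  (Matrix.of ![M 0, (0 : Fin 2 → ℝ)]).mulVec (Φ (x + 1))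
    + (Matrix.of ![(0 : Fin 2 → ℝ), M 1]).mulVec (Φ (x - 1))

/-- The time evolution `U_D = S∘C_D` of the 2-state DQW on `ℤ` with coin pair `(M_R, M_I)`:
`(U_DΨ)(x) = P_R(ℜΨ)(x+1) + Q_R(ℜΨ)(x−1) + i·{P_I(ℑΨ)(x+1) + Q_I(ℑΨ)(x−1)}`. -/
def dqwU (MR MI : Matrix (Fin 2) (Fin 2) ℂ) (Ψ : ℤ → Fin 2 → ℂ) : ℤ → Fin 2 → ℂ := fun x =>
  (Matrix.of ![MR 0, (0 : Fin 2 → ℂ)]).mulVec (fun i => (((Ψ (x + 1) i).re : ℝ) : ℂ))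
    + (Matrix.of ![(0 : Fin 2 → ℂ), MR 1]).mulVec (fun i => (((Ψ (x - 1) i).re : ℝ) : ℂ))
    + Complex.I •
      ((Matrix.of ![MI 0, (0 : Fin 2 → ℂ)]).mulVec (fun i => (((Ψ (x + 1) i).im : ℝ) : ℂ))
        + (Matrix.of ![(0 : Fin 2 → ℂ), MI 1]).mulVec (fun i => (((Ψ (x - 1) i).im : ℝ) : ℂ)))

theorem dqwU_semiconj_re (MR MI : Matrix (Fin 2) (Fin 2) ℝ) :
    Function.Semiconj (fun (Ψ : ℤ → Fin 2 → ℂ) z i => (Ψ z i).re)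
      (dqwU (MR.map (fun r => (r : ℂ))) (MI.map (fun r => (r : ℂ)))) (lqwUR MR) := by
  intro Ψ
  funext x i
  fin_cases i <;> simp [dqwU, lqwUR, dotProduct, Fin.sum_univ_two]

theorem dqwU_semiconj_im (MR MI : Matrix (Fin 2) (Fin 2) ℝ) :
    Function.Semiconj (fun (Ψ : ℤ → Fin 2 → ℂ) z i => (Ψ z i).im)
      (dqwU (MR.map (fun r => (r : ℂ))) (MI.map (fun r => (r : ℂ)))) (lqwUR MI) := by
  intro Ψ
  funext x i
  fin_cases i <;> simp [dqwU, lqwUR, dotProduct, Fin.sum_univ_two]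

theorem dqw_real_coins_decouple_general (MR MI : Matrix (Fin 2) (Fin 2) ℝ)
    (Ψ₀ : ℤ → Fin 2 → ℂ) :
    ∀ n : ℕ, ∀ x : ℤ,
      (∀ i,
        (((dqwU (MR.map (fun r => (r : ℂ))) (MI.map (fun r => (r : ℂ))))^[n] Ψ₀) x i).re
          = ((lqwUR MR)^[n] (fun z i => (Ψ₀ z i).re)) x i) ∧
      (∀ i,
        (((dqwU (MR.map (fun r => (r : ℂ))) (MI.map (fun r => (r : ℂ))))^[n] Ψ₀) x i).im
          = ((lqwUR MI)^[n] (fun z i => (Ψ₀ z i).im)) x i) ∧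
      (∑ i, Complex.normSq
          (((dqwU (MR.map (fun r => (r : ℂ))) (MI.map (fun r => (r : ℂ))))^[n] Ψ₀) x i)
        = (∑ i, ((lqwUR MR)^[n] (fun z i => (Ψ₀ z i).re)) x i ^ 2)
          + ∑ i, ((lqwUR MI)^[n] (fun z i => (Ψ₀ z i).im)) x i ^ 2) := by
  intro n x
  have hre := congrFun ((dqwU_semiconj_re MR MI).iterate_right n Ψ₀) x
  have him := congrFun ((dqwU_semiconj_im MR MI).iterate_right n Ψ₀) x
  refine ⟨congrFun hre, congrFun him, ?_⟩
  rw [← Finset.sum_add_distrib, ← hre, ← him]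
  exact Finset.sum_congr rfl fun i _ => by rw [Complex.normSq_apply]; ring

/-- When `M_R` and `M_I` are real orthogonal matrices, the real and imaginary parts of the
DQW evolve independently under the LQWs with coins `M_R` and `M_I`, and the DQW probability
measure is the sum of the probability measures of these two LQWs. -/
theorem dqw_real_coins_decouple (MR MI : Matrix (Fin 2) (Fin 2) ℝ)
    (hMR : MR ∈ Matrix.orthogonalGroup (Fin 2) ℝ)
    (hMI : MI ∈ Matrix.orthogonalGroup (Fin 2) ℝ)
    (Ψ₀ : ℤ → Fin 2 → ℂ) :
    ∀ n : ℕ, ∀ x : ℤ,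
      (∀ i,
        (((dqwU (MR.map (fun r => (r : ℂ))) (MI.map (fun r => (r : ℂ))))^[n] Ψ₀) x i).re
          = ((lqwUR MR)^[n] (fun z i => (Ψ₀ z i).re)) x i) ∧
      (∀ i,
        (((dqwU (MR.map (fun r => (r : ℂ))) (MI.map (fun r => (r : ℂ))))^[n] Ψ₀) x i).im
          = ((lqwUR MI)^[n] (fun z i => (Ψ₀ z i).im)) x i) ∧
      (∑ i, Complex.normSq
          (((dqwU (MR.map (fun r => (r : ℂ))) (MI.map (fun r => (r : ℂ))))^[n] Ψ₀) x i)
        = (∑ i, ((lqwUR MR)^[n] (fun z i => (Ψ₀ z i).re)) x i ^ 2)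
          + ∑ i, ((lqwUR MI)^[n] (fun z i => (Ψ₀ z i).im)) x i ^ 2) :=
  dqw_real_coins_decouple_general MR MI Ψ₀

end
end

section
/- For Δ ∈ ℝ, let M̃(Δ) = (1/√2)·[[cosΔ, sinΔ, −cosΔ, sinΔ],[sinΔ, cosΔ, sinΔ, −cosΔ],[sinΔ, −cosΔ, −sinΔ, −cosΔ],[−cosΔ, sinΔ, −cosΔ, −sinΔ]] and Û(k) = diag(e^{ik}, e^{−ik}, e^{ik}, e^{−ik})·M̃(Δ), and set p = (cosΔ − sinΔ)/√2. Then for every k ∈ ℝ the characteristic polynomial of Û(k) factors as det(x·I₄ − Û(k)) = (x² − 1)(x² − 2p·cos(k)·x + 1); in particular the eigenvalues of Û(k) are λ₁ = 1, λ₂ = −1, λ₃ = p·cos(k) + i√(1 − p²cos²(k)), and λ₄ = p·cos(k) − i√(1 − p²cos²(k)). -/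
open Matrix Real

noncomputable section

/-- The coin matrix `M̃(Δ)` of the one-parameter family of 4-state Grover walks. -/
def MtildeGrover (Δ : ℝ) : Matrix (Fin 4) (Fin 4) ℝ :=
  (Real.sqrt 2)⁻¹ •
    !![Real.cos Δ, Real.sin Δ, -Real.cos Δ, Real.sin Δ;
       Real.sin Δ, Real.cos Δ, Real.sin Δ, -Real.cos Δ;
       Real.sin Δ, -Real.cos Δ, -Real.sin Δ, -Real.cos Δ;
       -Real.cos Δ, Real.sin Δ, -Real.cos Δ, -Real.sin Δ]

/-- The Fourier-space evolution matrix `Û(k) = diag(e^{ik}, e^{−ik}, e^{ik}, e^{−ik})·M̃(Δ)`. -/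
def UhatGrover (Δ : ℝ) (k : ℝ) : Matrix (Fin 4) (Fin 4) ℂ :=
  Matrix.diagonal
      ![Complex.exp ((k : ℂ) * Complex.I), Complex.exp (-(k : ℂ) * Complex.I),
        Complex.exp ((k : ℂ) * Complex.I), Complex.exp (-(k : ℂ) * Complex.I)] *
    (MtildeGrover Δ).map (fun r => (r : ℂ))

/-!
Write `c = cos Δ`, `s = sin Δ`, `E = e^{ik}`, `F = e^{-ik}` and `q = 1/√2`. Expanding the
determinant, `det(x·1 − Û(k))` reduces to `(x² − 1)(x² − q(c − s)(E + F)x + 1)` using only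
`c² + s² = 1`, `EF = 1` and `2q² = 1`, so this is an identity over any commutative ring. Since
`E + F = 2 cos k`, the quadratic factor has the real coefficient `p cos k` with `|p| ≤ 1`, and its
roots are the conjugate pair `p cos k ± i√(1 − p² cos² k)`.
-/

theorem Matrix.det_fin_four {R : Type*} [CommRing R] (A : Matrix (Fin 4) (Fin 4) R) :
    A.det =
      A 0 0 * A 1 1 * A 2 2 * A 3 3 - A 0 0 * A 1 1 * A 2 3 * A 3 2
      - A 0 0 * A 1 2 * A 2 1 * A 3 3 + A 0 0 * A 1 2 * A 2 3 * A 3 1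
      + A 0 0 * A 1 3 * A 2 1 * A 3 2 - A 0 0 * A 1 3 * A 2 2 * A 3 1
      - A 0 1 * A 1 0 * A 2 2 * A 3 3 + A 0 1 * A 1 0 * A 2 3 * A 3 2
      + A 0 1 * A 1 2 * A 2 0 * A 3 3 - A 0 1 * A 1 2 * A 2 3 * A 3 0
      - A 0 1 * A 1 3 * A 2 0 * A 3 2 + A 0 1 * A 1 3 * A 2 2 * A 3 0
      + A 0 2 * A 1 0 * A 2 1 * A 3 3 - A 0 2 * A 1 0 * A 2 3 * A 3 1
      - A 0 2 * A 1 1 * A 2 0 * A 3 3 + A 0 2 * A 1 1 * A 2 3 * A 3 0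
      + A 0 2 * A 1 3 * A 2 0 * A 3 1 - A 0 2 * A 1 3 * A 2 1 * A 3 0
      - A 0 3 * A 1 0 * A 2 1 * A 3 2 + A 0 3 * A 1 0 * A 2 2 * A 3 1
      + A 0 3 * A 1 1 * A 2 0 * A 3 2 - A 0 3 * A 1 1 * A 2 2 * A 3 0
      - A 0 3 * A 1 2 * A 2 0 * A 3 1 + A 0 3 * A 1 2 * A 2 1 * A 3 0 := by
  rw [det_succ_row_zero, Fin.sum_univ_four]
  simp only [Nat.succ_eq_add_one, Nat.reduceAdd, Fin.isValue, Fin.coe_ofNat_eq_mod, Nat.zero_mod,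
    pow_zero, one_mul, Fin.succAbove_zero, det_fin_three, submatrix_apply, Fin.succ_zero_eq_one,
    Fin.succ_one_eq_two, Fin.reduceSucc, Nat.one_mod, pow_one, neg_mul, Fin.succAbove,
    Fin.castSucc_zero, zero_lt_one, ↓reduceIte, Fin.castSucc_one, lt_self_iff_false,
    Fin.reduceCastSucc, Fin.lt_def, Nat.reduceMod, Nat.not_ofNat_lt_one, even_two, Even.neg_pow,
    one_pow, Order.lt_two_iff, zero_le, Std.le_refl, Nat.mod_succ, Nat.ofNat_pos, Nat.one_lt_ofNat,
    Nat.lt_add_one]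
  ring

theorem Matrix.spectrum_eq_setOf_det_smul_one_sub {n K : Type*} [Fintype n] [DecidableEq n]
    [Field K] (A : Matrix n n K) :
    spectrum K A = {z | (z • (1 : Matrix n n K) - A).det = 0} := by
  ext z
  simp [spectrum.mem_iff, Algebra.algebraMap_eq_smul_one, Matrix.isUnit_iff_isUnit_det]

section GroverCoin

variable {R : Type*} [CommRing R]

/-- `√2 · M̃(Δ)` with `c = cos Δ`, `s = sin Δ`. -/
def groverCoin (c s : R) : Matrix (Fin 4) (Fin 4) R :=
  !![c, s, -c, s; s, c, s, -c; s, -c, -s, -c; -c, s, -c, -s]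

theorem det_smul_one_sub_diagonal_mul_groverCoin {c s E F q : R} (hcs : c ^ 2 + s ^ 2 = 1)
    (hEF : E * F = 1) (hq : 2 * q ^ 2 = 1) (x : R) :
    (x • (1 : Matrix (Fin 4) (Fin 4) R) - diagonal ![E, F, E, F] * q • groverCoin c s).det =
      (x ^ 2 - 1) * (x ^ 2 - q * (c - s) * (E + F) * x + 1) := by
  rw [det_fin_four]
  simp only [groverCoin, smul_of, smul_cons, smul_eq_mul, mul_neg, smul_empty, Matrix.sub_apply,
    Matrix.smul_apply, one_apply_eq, one_apply_ne, diagonal_mul, of_apply, cons_val',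
    cons_val_zero, cons_val_one, cons_val, cons_val_fin_one, ne_eq, Fin.reduceEq,
    not_false_eq_true, mul_one, mul_zero]
  linear_combination
      (-4*E^2*F^2*q^4 - 4*s^2*E^2*F^2*q^4 - 4*c^2*E^2*F^2*q^4 - 2*x*s*E*F^2*q^3
        - 2*x*s*E^2*F*q^3 + 2*x*c*E*F^2*q^3 + 2*x*c*E^2*F*q^3) * hcs
    + (-4*q^4 - 4*E*F*q^4 - 2*x*s*F*q^3 - 2*x*s*E*q^3 + 2*x*c*F*q^3 + 2*x*c*E*q^3) * hEF
    + (-1 - 2*q^2 - x*s*F*q - x*s*E*q + x*c*F*q + x*c*E*q) * hq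

end GroverCoin

theorem uhatGrover_eq (Δ k : ℝ) :
    UhatGrover Δ k =
      diagonal ![Complex.exp (k * Complex.I), Complex.exp (-k * Complex.I),
          Complex.exp (k * Complex.I), Complex.exp (-k * Complex.I)] *
        ((Real.sqrt 2 : ℂ)⁻¹ • groverCoin (Real.cos Δ : ℂ) (Real.sin Δ)) := by
  rw [UhatGrover]
  congr 1
  ext i j
  fin_cases i <;> fin_cases j <;> simp [MtildeGrover, groverCoin]

theorem uhatGrover_det (Δ k : ℝ) (x : ℂ) :
    (x • (1 : Matrix (Fin 4) (Fin 4) ℂ) - UhatGrover Δ k).det =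
      (x ^ 2 - 1) *
        (x ^ 2 - 2 * (((Real.cos Δ - Real.sin Δ) / Real.sqrt 2 : ℝ) : ℂ) * (Real.cos k : ℂ) * x
          + 1) := by
  have hcs : (Real.cos Δ : ℂ) ^ 2 + (Real.sin Δ : ℂ) ^ 2 = 1 := by
    exact_mod_cast Real.cos_sq_add_sin_sq Δ
  have hEF : Complex.exp (k * Complex.I) * Complex.exp (-k * Complex.I) = 1 := by
    rw [← Complex.exp_add, ← add_mul, add_neg_cancel, zero_mul, Complex.exp_zero]
  have hq : 2 * ((Real.sqrt 2 : ℂ)⁻¹) ^ 2 = 1 := by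
    rw [inv_pow, ← Complex.ofReal_pow, Real.sq_sqrt zero_le_two]
    norm_num
  rw [uhatGrover_eq, det_smul_one_sub_diagonal_mul_groverCoin hcs hEF hq, Complex.ofReal_cos k,
    Complex.cos]
  push_cast
  ring

theorem setOf_sq_sub_one_mul_quadratic_eq_zero (a : ℝ) (ha : a ^ 2 ≤ 1) :
    {z : ℂ | (z ^ 2 - 1) * (z ^ 2 - 2 * a * z + 1) = 0} =
      {1, -1, a + Real.sqrt (1 - a ^ 2) * Complex.I, a - Real.sqrt (1 - a ^ 2) * Complex.I} := by
  have hb : (Real.sqrt (1 - a ^ 2) : ℂ) ^ 2 = 1 - a ^ 2 := by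
    rw [← Complex.ofReal_pow, Real.sq_sqrt (by linarith)]
    push_cast
    ring
  ext z
  have hfactor : (z ^ 2 - 1) * (z ^ 2 - 2 * a * z + 1) =
      (z - 1) * (z - -1) * (z - (a + Real.sqrt (1 - a ^ 2) * Complex.I)) *
        (z - (a - Real.sqrt (1 - a ^ 2) * Complex.I)) := by
    linear_combination
      (1 - z ^ 2) * hb + (z ^ 2 - 1) * (Real.sqrt (1 - a ^ 2) : ℂ) ^ 2 * Complex.I_sq
  rw [Set.mem_ofPred_eq, hfactor]
  simp only [mul_eq_zero, sub_eq_zero, Set.mem_insert_iff, Set.mem_singleton_iff, or_assoc]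

theorem sq_cos_sub_sin_div_sqrt_two_le_one (Δ : ℝ) :
    ((Real.cos Δ - Real.sin Δ) / Real.sqrt 2) ^ 2 ≤ 1 := by
  rw [div_pow, Real.sq_sqrt zero_le_two, div_le_one two_pos]
  nlinarith [Real.cos_sq_add_sin_sq Δ, sq_nonneg (Real.cos Δ + Real.sin Δ)]

/-- With `p = (cosΔ − sinΔ)/√2`, the characteristic polynomial of `Û(k)` factors as
`(x² − 1)(x² − 2p·cos(k)·x + 1)`; in particular the eigenvalues of `Û(k)` are
`1`, `−1`, and `p·cos(k) ± i√(1 − p²cos²(k))`. -/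
theorem uhat_grover_charpoly (Δ : ℝ) :
    ∀ k : ℝ,
      (∀ x : ℂ,
        Matrix.det (x • (1 : Matrix (Fin 4) (Fin 4) ℂ) - UhatGrover Δ k)
          = (x ^ 2 - 1) *
            (x ^ 2
              - 2 * (((Real.cos Δ - Real.sin Δ) / Real.sqrt 2 : ℝ) : ℂ) * (Real.cos k : ℂ) * x
              + 1)) ∧
      spectrum ℂ (UhatGrover Δ k) =
        {(1 : ℂ), (-1 : ℂ),
          ((((Real.cos Δ - Real.sin Δ) / Real.sqrt 2) * Real.cos k : ℝ) : ℂ)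
            + (Real.sqrt (1 - ((Real.cos Δ - Real.sin Δ) / Real.sqrt 2) ^ 2 * Real.cos k ^ 2) : ℂ)
              * Complex.I,
          ((((Real.cos Δ - Real.sin Δ) / Real.sqrt 2) * Real.cos k : ℝ) : ℂ)
            - (Real.sqrt (1 - ((Real.cos Δ - Real.sin Δ) / Real.sqrt 2) ^ 2 * Real.cos k ^ 2) : ℂ)
              * Complex.I} := by
  intro k
  refine ⟨uhatGrover_det Δ k, ?_⟩
  have hp : ((Real.cos Δ - Real.sin Δ) / Real.sqrt 2 * Real.cos k) ^ 2 ≤ 1 := by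
    rw [mul_pow]
    exact mul_le_one₀ (sq_cos_sub_sin_div_sqrt_two_le_one Δ) (sq_nonneg _) (Real.cos_sq_le_one k)
  rw [Matrix.spectrum_eq_setOf_det_smul_one_sub, ← mul_pow,
    ← setOf_sq_sub_one_mul_quadratic_eq_zero _ hp]
  ext z
  rw [Set.mem_ofPred_eq, Set.mem_ofPred_eq, uhatGrover_det]
  push_cast
  ring_nf

end
end

section
/- Let Δ = π/4 or Δ = −3π/4, and let Û(k) = diag(e^{ik}, e^{−ik}, e^{ik}, e^{−ik})·M̃(Δ). Then Û(k)⁴ = I₄ for every k ∈ ℝ. Moreover, setting j = 0 if Δ = π/4 and j = 1 if Δ = −3π/4: Û(k)¹ = ((−1)^j/2)·[[e^{ik}, e^{ik}, −e^{ik}, e^{ik}],[e^{−ik}, e^{−ik}, e^{−ik}, −e^{−ik}],[e^{ik}, −e^{ik}, −e^{ik}, −e^{ik}],[−e^{−ik}, e^{−ik}, −e^{−ik}, −e^{−ik}]], Û(k)² = (1/2)·[[0, 1+e^{2ik}, 0, −1+e^{2ik}],[1+e^{−2ik}, 0, −1+e^{−2ik}, 0],[0, −1+e^{2ik}, 0,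 1+e^{2ik}],[−1+e^{−2ik}, 0, 1+e^{−2ik}, 0]], and Û(k)³ = ((−1)^j/2)·[[e^{−ik}, e^{ik}, e^{−ik}, −e^{ik}],[e^{−ik}, e^{ik}, −e^{−ik}, e^{ik}],[−e^{−ik}, e^{ik}, −e^{−ik}, −e^{ik}],[e^{−ik}, −e^{ik}, −e^{−ik}, −e^{ik}]]. -/
open Matrix Real

noncomputable section

/-!
For these two values `cos Δ = sin Δ = ±1/√2`, so `Û(k) = ±½ C` with
`C = diag(z, w, z, w) S = core z w`, where `z = e^{ik}`, `w = e^{-ik}` and `S` is a ±1 sign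
matrix. Using only `z w = 1` one checks `C² = 2V` and `V² = 4`, where
`V = coreSqHalf z w = 2 Û(k)²`; hence `Û(k)⁴ = (C²)² / 16 = 1`, and
`Û(k)³ = Û(k)² Û(k) = ±¼ V C` is read off from `V C = C³ / 2`.
-/

namespace GroverWalk

section CommRing

variable {R : Type*} [CommRing R] (z w : R)

def core : Matrix (Fin 4) (Fin 4) R :=
  !![z, z, -z, z; w, w, w, -w; z, -z, -z, -z; -w, w, -w, -w]

def coreSqHalf : Matrix (Fin 4) (Fin 4) R :=
  !![0, 1 + z ^ 2, 0, -1 + z ^ 2; 1 + w ^ 2, 0, -1 + w ^ 2, 0;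
     0, -1 + z ^ 2, 0, 1 + z ^ 2; -1 + w ^ 2, 0, 1 + w ^ 2, 0]

def coreCubeQuarter : Matrix (Fin 4) (Fin 4) R :=
  !![w, z, w, -z; w, z, -w, z; -w, z, -w, -z; w, -z, -w, -z]

variable {z w}

theorem core_sq (h : z * w = 1) : core z w ^ 2 = (2 : R) • coreSqHalf z w := by
  ext a b
  fin_cases a <;> fin_cases b <;>
    simp only [core, coreSqHalf, pow_two, mul_apply, Fin.sum_univ_four, of_apply,
      cons_val', cons_val_zero, cons_val_one, cons_val, cons_val_fin_one, Matrix.smul_apply,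
      smul_eq_mul, Fin.isValue, Fin.zero_eta, Fin.mk_one, Fin.reduceFinMk] <;>
    grind

theorem coreSqHalf_mul_core (h : z * w = 1) :
    coreSqHalf z w * core z w = (2 : R) • coreCubeQuarter z w := by
  ext a b
  fin_cases a <;> fin_cases b <;>
    simp only [core, coreSqHalf, coreCubeQuarter, mul_apply, Fin.sum_univ_four, of_apply,
      cons_val', cons_val_zero, cons_val_one, cons_val, cons_val_fin_one, Matrix.smul_apply,
      smul_eq_mul, Fin.isValue, Fin.zero_eta, Fin.mk_one, Fin.reduceFinMk] <;>
    grind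

theorem coreSqHalf_sq (h : z * w = 1) : coreSqHalf z w ^ 2 = (4 : R) • 1 := by
  ext a b
  fin_cases a <;> fin_cases b <;>
    simp only [coreSqHalf, pow_two, mul_apply, one_apply, Fin.sum_univ_four, of_apply,
      cons_val', cons_val_zero, cons_val_one, cons_val, cons_val_fin_one, Matrix.smul_apply,
      smul_eq_mul, Fin.isValue, Fin.zero_eta, Fin.mk_one, Fin.reduceFinMk] <;>
    grind

end CommRing

open Complex in
theorem UhatGrover_eq_smul_core {Δ : ℝ} (h : Real.sin Δ = Real.cos Δ) (k : ℝ) :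
    UhatGrover Δ k = ((Real.cos Δ / √2 : ℝ) : ℂ) • core (exp (k * I)) (exp (-k * I)) := by
  ext a b
  rw [UhatGrover, diagonal_mul, map_apply, MtildeGrover, h]
  fin_cases a <;> fin_cases b <;>
    simp only [core, of_apply, cons_val', cons_val_zero, cons_val_one, cons_val, cons_val_fin_one,
      Matrix.smul_apply, smul_eq_mul, Fin.isValue, Fin.zero_eta, Fin.mk_one, Fin.reduceFinMk] <;>
    push_cast <;> ring

theorem sin_eq_cos_and_cos_div_sqrt_two {Δ : ℝ} {j : ℕ}
    (hΔ : (Δ = π / 4 ∧ j = 0) ∨ (Δ = -3 * π / 4 ∧ j = 1)) :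
    Real.sin Δ = Real.cos Δ ∧ Real.cos Δ / √2 = (-1) ^ j / 2 := by
  have hsqrt : √2 / 2 / √2 = 1 / 2 := by field_simp
  rcases hΔ with ⟨rfl, rfl⟩ | ⟨rfl, rfl⟩
  · simp [hsqrt]
  · rw [show -3 * π / 4 = π / 4 - π by ring, Real.sin_sub_pi, Real.cos_sub_pi,
      Real.sin_pi_div_four, Real.cos_pi_div_four, neg_div, hsqrt]
    norm_num

end GroverWalk

open GroverWalk

/-- For `Δ = π/4` (`j = 0`) or `Δ = −3π/4` (`j = 1`), `Û(k)⁴ = I₄` and the powers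
`Û(k)`, `Û(k)²`, `Û(k)³` are given explicitly. -/
theorem uhat_grover_period_four (Δ : ℝ) (j : ℕ)
    (hΔ : (Δ = π / 4 ∧ j = 0) ∨ (Δ = -3 * π / 4 ∧ j = 1)) :
    ∀ k : ℝ,
      UhatGrover Δ k ^ 4 = 1 ∧
      UhatGrover Δ k
        = ((-1) ^ j / 2 : ℂ) •
          !![Complex.exp ((k : ℂ) * Complex.I), Complex.exp ((k : ℂ) * Complex.I),
               -Complex.exp ((k : ℂ) * Complex.I), Complex.exp ((k : ℂ) * Complex.I);
             Complex.exp (-(k : ℂ) * Complex.I), Complex.exp (-(k : ℂ) * Complex.I),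
               Complex.exp (-(k : ℂ) * Complex.I), -Complex.exp (-(k : ℂ) * Complex.I);
             Complex.exp ((k : ℂ) * Complex.I), -Complex.exp ((k : ℂ) * Complex.I),
               -Complex.exp ((k : ℂ) * Complex.I), -Complex.exp ((k : ℂ) * Complex.I);
             -Complex.exp (-(k : ℂ) * Complex.I), Complex.exp (-(k : ℂ) * Complex.I),
               -Complex.exp (-(k : ℂ) * Complex.I), -Complex.exp (-(k : ℂ) * Complex.I)] ∧
      UhatGrover Δ k ^ 2
        = (1 / 2 : ℂ) •
          !![0, 1 + Complex.exp (2 * (k : ℂ) * Complex.I), 0,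
               -1 + Complex.exp (2 * (k : ℂ) * Complex.I);
             1 + Complex.exp (-(2 * (k : ℂ)) * Complex.I), 0,
               -1 + Complex.exp (-(2 * (k : ℂ)) * Complex.I), 0;
             0, -1 + Complex.exp (2 * (k : ℂ) * Complex.I), 0,
               1 + Complex.exp (2 * (k : ℂ) * Complex.I);
             -1 + Complex.exp (-(2 * (k : ℂ)) * Complex.I), 0,
               1 + Complex.exp (-(2 * (k : ℂ)) * Complex.I), 0] ∧
      UhatGrover Δ k ^ 3
        = ((-1) ^ j / 2 : ℂ) •
          !![Complex.exp (-(k : ℂ) * Complex.I), Complex.exp ((k : ℂ) * Complex.I),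
               Complex.exp (-(k : ℂ) * Complex.I), -Complex.exp ((k : ℂ) * Complex.I);
             Complex.exp (-(k : ℂ) * Complex.I), Complex.exp ((k : ℂ) * Complex.I),
               -Complex.exp (-(k : ℂ) * Complex.I), Complex.exp ((k : ℂ) * Complex.I);
             -Complex.exp (-(k : ℂ) * Complex.I), Complex.exp ((k : ℂ) * Complex.I),
               -Complex.exp (-(k : ℂ) * Complex.I), -Complex.exp ((k : ℂ) * Complex.I);
             Complex.exp (-(k : ℂ) * Complex.I), -Complex.exp ((k : ℂ) * Complex.I),
               -Complex.exp (-(k : ℂ) * Complex.I), -Complex.exp ((k : ℂ) * Complex.I)] := by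
  intro k
  obtain ⟨hsin, hcos⟩ := sin_eq_cos_and_cos_div_sqrt_two hΔ
  set z := Complex.exp ((k : ℂ) * Complex.I)
  set w := Complex.exp (-(k : ℂ) * Complex.I)
  set s : ℂ := (-1) ^ j / 2
  have hzw : z * w = 1 := by simp [z, w, ← Complex.exp_add]
  have hs2 : s ^ 2 = 1 / 4 := by
    rw [div_pow, ← pow_mul, mul_comm, pow_mul, neg_one_sq, one_pow]; norm_num
  have hU : UhatGrover Δ k = s • core z w := by
    rw [UhatGrover_eq_smul_core hsin, hcos]; push_cast; rfl
  have hU2 : UhatGrover Δ k ^ 2 = (1 / 2 : ℂ) • coreSqHalf z w := by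
    rw [hU, smul_pow, core_sq hzw, smul_smul, hs2]; norm_num
  refine ⟨?_, hU, ?_, ?_⟩
  · rw [show UhatGrover Δ k ^ 4 = (UhatGrover Δ k ^ 2) ^ 2 by rw [← pow_mul], hU2, smul_pow,
      coreSqHalf_sq hzw, smul_smul]
    norm_num
  · rw [hU2, coreSqHalf, ← Complex.exp_nat_mul, ← Complex.exp_nat_mul]
    ring_nf
  · rw [pow_succ, hU2, hU, smul_mul_smul, coreSqHalf_mul_core hzw, smul_smul]
    congr 1
    ring

end
end
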